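/- Let μ be a probability measure on the unit circle T and let v: D → ℝ be continuous on the unit disc. Define u(z) = ∫_T v(ξz) dμ(ξ). Then for every 0 < R < 1 and 0 ≤ θ ≤ π, u*(Re^{iθ}) ≤ v*(Re^{iθ}), where g*(Re^{iθ}) = sup_{|E| = 2θ} ∫_E g(Re^{it}) dt (supremum over measurable E ⊆ [-π,π] of Lebesgue measure 2θ). -/

import Mathlib

/-! By Fubini, `∫_E u(Re^{it}) dt` is the `μ`-average over `ξ` of `∫_E v(ξRe^{it}) dt`. Each of
these equals `∫_{E'} v(Re^{it}) dt`, where `E'` is the rotated copy `E + arg ξ` folded back into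
`[-π, π]` by periodicity; `E'` has the same measure as `E`, so each integral is at most `v*`. -/

open Complex MeasureTheory Metric Set
open scoped Real

/-- The Baernstein star-function of `g : ℝ → ℝ`:
`g*(θ) = sup { ∫_E g(t) dt : E ⊆ [-π,π] measurable, |E| = 2θ }`. -/
noncomputable def starFn (g : ℝ → ℝ) (θ : ℝ) : ℝ :=
  sSup ((fun E => ∫ t in E, g t) ''
    {E : Set ℝ | MeasurableSet E ∧ E ⊆ Icc (-π) π ∧
      volume E = ENNReal.ofReal (2 * θ)})

open Function

theorem setIntegral_le_starFn {f : ℝ → ℝ} (hf : IntegrableOn f (Icc (-π) π)) {θ : ℝ}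
    {E : Set ℝ} (hE : MeasurableSet E) (hEπ : E ⊆ Icc (-π) π)
    (hvol : volume E = ENNReal.ofReal (2 * θ)) :
    ∫ t in E, f t ≤ starFn f θ := by
  refine le_csSup ⟨∫ t in Icc (-π) π, |f t|, ?_⟩ ⟨E, ⟨hE, hEπ, hvol⟩, rfl⟩
  rintro _ ⟨F, ⟨-, hFπ, -⟩, rfl⟩
  calc ∫ t in F, f t ≤ ∫ t in F, |f t| :=
        setIntegral_mono (hf.mono_set hFπ) (IntegrableOn.mono_set hf.abs hFπ) fun t => le_abs_self _
    _ ≤ ∫ t in Icc (-π) π, |f t| :=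
        setIntegral_mono_set hf.abs (ae_of_all _ fun t => abs_nonneg _) hFπ.eventuallyLE

/-- A set `S ⊆ [c, c + T]` with `a ≤ c ≤ a + T` is cut at `a + T` and its upper part is moved
down by the period; the two pieces then meet at most in `c`. -/
theorem Function.Periodic.exists_subset_Icc_setIntegral_eq {f : ℝ → ℝ} {T : ℝ}
    (hf : Periodic f T) (hfi : LocallyIntegrable f) {a c : ℝ} (hac : a ≤ c) (hca : c ≤ a + T)
    {S : Set ℝ} (hS : MeasurableSet S) (hSc : S ⊆ Icc c (c + T)) :
    ∃ W, MeasurableSet W ∧ W ⊆ Icc a (a + T) ∧ volume W = volume S ∧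
      ∫ t in W, f t = ∫ t in S, f t := by
  set A := S ∩ Icc a (a + T)
  set C := S \ Icc a (a + T)
  set B := (· + T) ⁻¹' C
  have hBm : MeasurableSet B := (hS.diff measurableSet_Icc).preimage (measurable_add_const T)
  have hBc : B ⊆ Icc a c := fun x ⟨hxS, hxA⟩ => by
    have := hSc hxS
    simp only [mem_Icc, not_and_or, not_le] at this hxA
    constructor <;> rcases hxA with h | h <;> linarith
  have hAB : AEDisjoint volume A B := by
    refine measure_mono_null (fun x hx => ?_) (measure_singleton c)
    exact le_antisymm (hBc hx.2).2 (hSc hx.1.1).1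
  have hmp := measurePreserving_add_right volume T
  have hemb := measurableEmbedding_addRight T
  have hIA : IntegrableOn f A :=
    (hfi.integrableOn_isCompact isCompact_Icc).mono_set inter_subset_right
  have hIB : IntegrableOn f B := (hfi.integrableOn_isCompact isCompact_Icc).mono_set hBc
  have hIS : IntegrableOn f S := (hfi.integrableOn_isCompact isCompact_Icc).mono_set hSc
  refine ⟨A ∪ B, (hS.inter measurableSet_Icc).union hBm,
    union_subset inter_subset_right (hBc.trans (Icc_subset_Icc_right (by linarith))), ?_, ?_⟩
  · rw [measure_union₀ hBm.nullMeasurableSet hAB, hmp.measure_preimage_emb hemb,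
      measure_inter_add_sdiff _ measurableSet_Icc]
  · have hBC : ∫ t in B, f t = ∫ t in C, f t := by
      rw [← hmp.setIntegral_preimage_emb hemb f C]
      exact setIntegral_congr_fun hBm fun x _ => (hf x).symm
    rw [setIntegral_union₀ hAB hBm.nullMeasurableSet hIA hIB, hBC,
      integral_inter_add_sdiff measurableSet_Icc hIS]

/-- It suffices to shift by `β = α mod 2π ∈ [0, 2π)`; then the shifted set lies in
`[β - π, β + π] ⊆ [-π, 3π]` and can be folded back into `[-π, π]`. -/
theorem Function.Periodic.setIntegral_comp_add_le_starFn {f : ℝ → ℝ} (hf : Periodic f (2 * π))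
    (hfi : LocallyIntegrable f) {θ : ℝ} {E : Set ℝ} (hE : MeasurableSet E)
    (hEπ : E ⊆ Icc (-π) π) (hvol : volume E = ENNReal.ofReal (2 * θ)) (α : ℝ) :
    ∫ t in E, f (t + α) ≤ starFn f θ := by
  have hp : (0 : ℝ) < 2 * π := by positivity
  obtain ⟨β, hβ, hshift⟩ : ∃ β ∈ Ico 0 (2 * π), ∀ t, f (t + α) = f (t + β) :=
    ⟨toIcoMod hp 0 α, by simpa using toIcoMod_mem_Ico hp 0 α, fun t => by
      rw [← self_sub_toIcoDiv_zsmul hp 0 α, ← add_sub_assoc, hf.sub_zsmul_eq]⟩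
  have hmp := measurePreserving_add_right volume β
  have hemb := measurableEmbedding_addRight β
  have himage : (· + β) '' E ⊆ Icc (β - π) (β - π + 2 * π) := by
    rintro _ ⟨t, ht, rfl⟩
    constructor <;> linarith [(hEπ ht).1, (hEπ ht).2]
  obtain ⟨W, hW, hWπ, hWvol, hWint⟩ := hf.exists_subset_Icc_setIntegral_eq hfi (a := -π)
    (by linarith [hβ.1]) (by linarith [hβ.2]) (hemb.measurableSet_image.2 hE) himage
  rw [show -π + 2 * π = π by ring] at hWπ
  calc ∫ t in E, f (t + α) = ∫ t in W, f t := by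
        simp only [hshift, hWint, hmp.setIntegral_image_emb hemb]
    _ ≤ starFn f θ := by
        refine setIntegral_le_starFn (hfi.integrableOn_isCompact isCompact_Icc) hW hWπ ?_
        rw [hWvol, image_add_right, measure_preimage_add_right, hvol]

theorem starFn_integral_comp_add_le {X : Type*} [MeasurableSpace X] (μ : Measure X)
    [IsProbabilityMeasure μ] {f : ℝ → ℝ} (hf : Continuous f) (hper : Periodic f (2 * π))
    {φ : X → ℝ} (hφ : Measurable φ) {θ : ℝ} (hθ : θ ∈ Icc 0 π) :
    starFn (fun t => ∫ x, f (t + φ x) ∂μ) θ ≤ starFn f θ := by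
  have hθE : Icc (-θ) θ ⊆ Icc (-π) π := Icc_subset_Icc (by linarith [hθ.2]) hθ.2
  refine csSup_le ⟨_, Icc (-θ) θ, ⟨measurableSet_Icc, hθE, by rw [Real.volume_Icc]; ring_nf⟩,
    rfl⟩ ?_
  rintro _ ⟨E, ⟨hE, hEπ, hvol⟩, rfl⟩
  have : IsFiniteMeasure (volume.restrict E) :=
    ⟨by rw [Measure.restrict_apply_univ, hvol]; exact ENNReal.ofReal_lt_top⟩
  obtain ⟨M, hM⟩ := (hper.isBounded_of_continuous Real.two_pi_pos.ne' hf).exists_norm_le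
  have hint : Integrable (uncurry fun x t => f (t + φ x)) (μ.prod (volume.restrict E)) :=
    (integrable_const M).mono' (by fun_prop) (ae_of_all _ fun p => hM _ ⟨_, rfl⟩)
  calc ∫ t in E, (∫ x, f (t + φ x) ∂μ) = ∫ x, (∫ t in E, f (t + φ x)) ∂μ :=
        (integral_integral_swap hint).symm
    _ ≤ ∫ _, starFn f θ ∂μ := integral_mono hint.integral_prod_left (integrable_const _)
        fun x => hper.setIntegral_comp_add_le_starFn hf.locallyIntegrable hE hEπ hvol (φ x)
    _ = starFn f θ := by simp

theorem mul_circleMap_zero_of_norm_eq_one {ξ : ℂ} (hξ1 : ‖ξ‖ = 1) (R t : ℝ) :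
    ξ * circleMap 0 R t = circleMap 0 R (t + arg ξ) := by
  have hξ : circleMap 0 1 (arg ξ) = ξ := by
    simpa [circleMap_zero, hξ1] using norm_mul_exp_arg_mul_I ξ
  nth_rewrite 1 [← hξ]
  rw [circleMap_zero_mul, one_mul, add_comm]

/-- Let `μ` be a probability measure on the unit circle `T` and
let `v : D → ℝ` be continuous on the unit disc.  Define `u(z) = ∫_T v(ξz) dμ(ξ)`.
Then for every `0 < R < 1` and `0 ≤ θ ≤ π`, `u*(Re^{iθ}) ≤ v*(Re^{iθ})`. -/
theorem star_of_average_le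
    (μ : Measure (sphere (0:ℂ) 1)) [IsProbabilityMeasure μ]
    (v : ℂ → ℝ) (hv : ContinuousOn v (ball (0:ℂ) 1))
    (u : ℂ → ℝ)
    (hu : ∀ z ∈ ball (0:ℂ) 1, u z = ∫ ξ : sphere (0:ℂ) 1, v ((ξ : ℂ) * z) ∂μ)
    (R : ℝ) (hR : R ∈ Ioo (0:ℝ) 1) (θ : ℝ) (hθ : θ ∈ Icc (0:ℝ) π) :
    starFn (fun t => u ((R : ℂ) * Complex.exp (t * Complex.I))) θ
      ≤ starFn (fun t => v ((R : ℂ) * Complex.exp (t * Complex.I))) θ := by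
  have hmem : ∀ t, circleMap 0 R t ∈ ball (0 : ℂ) 1 := fun t => by
    simp [norm_circleMap_zero, abs_of_pos hR.1, hR.2]
  have hu' : ∀ t, u (circleMap 0 R t) = ∫ ξ : sphere (0:ℂ) 1, v (circleMap 0 R (t + arg ξ)) ∂μ :=
    fun t => by simp [hu _ (hmem t), mul_circleMap_zero_of_norm_eq_one]
  simp only [← circleMap_zero, hu']
  exact starFn_integral_comp_add_le μ (hv.comp_continuous (continuous_circleMap 0 R) hmem)
    ((periodic_circleMap 0 R).comp v) (measurable_arg.comp measurable_subtype_coe) hθ
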